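/- Let q be a prime with q ≡ 3 (mod 8) and let n ≥ 1 be an integer. Then the 2-adic valuation of the order of GL(Fin n, ZMod q) is exactly v_2(|GL(n, 𝔽_q)|) = n + 2·⌊n/2⌋ + ∑_{i≥2} ⌊n/2^i⌋. -/

import Mathlib

/-!
Over `𝔽_q` one has `|GL(n, 𝔽_q)| = ∏_{i<n} q^i (q^{n-i} - 1)`, so for `p ∤ q` the `p`-adic
valuation is `∑_{k=1}^n v_p(q^k - 1)`. For `q ≡ 3 (mod 8)` the lifting-the-exponent lemma gives
`v_2(q^k - 1) = 1` for odd `k` and `= 2 + v_2(k)` for even `k`. Summing, the `1`s contribute `n`,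
the even `k` contribute `⌊n/2⌋` extra, and the `v_2(k)` add up to `v_2(n!)`, which Legendre's
formula turns into `⌊n/2⌋ + ∑_{i≥2} ⌊n/2^i⌋`.
-/

open Matrix Finset Nat

theorem padicValNat_eq_of_mod_pow_succ_eq_pow {p m a : ℕ} [hp : Fact p.Prime]
    (h : m % p ^ (a + 1) = p ^ a) : padicValNat p m = a := by
  have hm : m = p ^ a * (p * (m / p ^ (a + 1)) + 1) := by
    conv_lhs => rw [← Nat.div_add_mod m (p ^ (a + 1)), h]
    ring
  have hunit : ¬p ∣ p * (m / p ^ (a + 1)) + 1 := fun h =>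
    hp.out.not_dvd_one ((Nat.dvd_add_right (dvd_mul_right p _)).mp h)
  rw [hm, padicValNat.mul (pow_ne_zero _ hp.out.ne_zero) (by omega), padicValNat.prime_pow,
    padicValNat.eq_zero_of_not_dvd hunit, add_zero]

theorem padicValNat_finset_prod {ι : Type*} {p : ℕ} [Fact p.Prime] (s : Finset ι) {f : ι → ℕ}
    (hf : ∀ i ∈ s, f i ≠ 0) : padicValNat p (∏ i ∈ s, f i) = ∑ i ∈ s, padicValNat p (f i) := by
  classical
  induction s using Finset.induction_on with
  | empty => simp
  | insert i s hi ih =>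
    have hs : ∀ j ∈ s, f j ≠ 0 := fun j hj => hf j (mem_insert_of_mem hj)
    rw [prod_insert hi, sum_insert hi,
      padicValNat.mul (hf i (mem_insert_self i s)) (prod_ne_zero_iff.mpr hs), ih hs]

theorem padicValNat_factorial_eq_sum_range {p : ℕ} [Fact p.Prime] (n : ℕ) :
    padicValNat p n ! = ∑ k ∈ range n, padicValNat p (k + 1) := by
  rw [← prod_range_add_one_eq_factorial, padicValNat_finset_prod _ fun k _ => k.succ_ne_zero]

theorem padicValNat_pow_sub_pow_of_not_dvd {p q i n : ℕ} [hp : Fact p.Prime] (hpq : ¬p ∣ q)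
    (hq : 1 < q) (hin : i < n) :
    padicValNat p (q ^ n - q ^ i) = padicValNat p (q ^ (n - i) - 1) := by
  have hfactor : q ^ n - q ^ i = q ^ i * (q ^ (n - i) - 1) := by
    rw [Nat.mul_sub, mul_one, ← pow_add, Nat.add_sub_cancel' hin.le]
  rw [hfactor, padicValNat.mul (by positivity) (Nat.sub_ne_zero_of_lt (Nat.one_lt_pow
      (by omega) hq)), padicValNat.eq_zero_of_not_dvd fun h => hpq (hp.out.dvd_of_dvd_pow h),
    zero_add]

theorem padicValNat_card_GL_eq_sum {F : Type*} [Field F] [Fintype F] {p : ℕ} [Fact p.Prime]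
    (hp : ¬p ∣ Fintype.card F) (n : ℕ) :
    padicValNat p (Nat.card (GL (Fin n) F)) =
      ∑ k ∈ range n, padicValNat p (Fintype.card F ^ (k + 1) - 1) := by
  set q := Fintype.card F
  have hq : 1 < q := Fintype.one_lt_card
  rw [card_GL_field, Fin.prod_univ_eq_prod_range (fun i => q ^ n - q ^ i),
    padicValNat_finset_prod _ fun i hi =>
      Nat.sub_ne_zero_of_lt (Nat.pow_lt_pow_right hq (mem_range.mp hi)),
    ← sum_range_reflect]
  refine sum_congr rfl fun k hk => ?_
  rw [mem_range] at hk
  rw [padicValNat_pow_sub_pow_of_not_dvd hp hq (by omega)]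
  congr 3
  omega

theorem padicValNat_two_pow_sub_one_of_odd {q k : ℕ} (hq : q % 4 = 3) (hk : Odd k) :
    padicValNat 2 (q ^ k - 1) = 1 := by
  obtain ⟨m, rfl⟩ := hk
  have hmod : q ^ (2 * m + 1) % 4 = 3 := by
    rw [Nat.pow_mod, hq, pow_succ, pow_mul, Nat.mul_mod, Nat.pow_mod]
    norm_num
  have hpos : 0 < q ^ (2 * m + 1) := pow_pos (by omega) _
  exact padicValNat_eq_of_mod_pow_succ_eq_pow (by norm_num; omega)

theorem padicValNat_two_pow_sub_one_of_even {q k : ℕ} (hq : q % 8 = 3) (hk : Even k)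
    (hk0 : k ≠ 0) : padicValNat 2 (q ^ k - 1) = 2 + padicValNat 2 k := by
  have h := padicValNat.pow_two_sub_one (x := q) (by omega) (by omega) hk0 hk
  rw [padicValNat_eq_of_mod_pow_succ_eq_pow (a := 2) (m := q + 1) (by norm_num; omega),
    padicValNat_eq_of_mod_pow_succ_eq_pow (a := 1) (m := q - 1) (by norm_num; omega)] at h
  omega

theorem padicValNat_two_pow_sub_one_of_mod_eight_eq_three {q k : ℕ} (hq : q % 8 = 3)
    (hk : k ≠ 0) :
    padicValNat 2 (q ^ k - 1) = 1 + (if 2 ∣ k then 1 else 0) + padicValNat 2 k := by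
  rcases Nat.even_or_odd k with heven | hodd
  · rw [padicValNat_two_pow_sub_one_of_even hq heven hk, if_pos heven.two_dvd]
  · rw [padicValNat_two_pow_sub_one_of_odd (by omega) hodd, if_neg hodd.not_two_dvd_nat,
      padicValNat.eq_zero_of_not_dvd hodd.not_two_dvd_nat]

theorem sum_padicValNat_two_pow_succ_sub_one {q : ℕ} (hq : q % 8 = 3) (n : ℕ) :
    ∑ k ∈ range n, padicValNat 2 (q ^ (k + 1) - 1) = n + n / 2 + padicValNat 2 n ! := by
  rw [sum_congr rfl fun k _ =>
      padicValNat_two_pow_sub_one_of_mod_eight_eq_three hq k.succ_ne_zero,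
    sum_add_distrib, sum_add_distrib, sum_const, card_range, smul_eq_mul, mul_one, sum_boole,
    card_multiples, padicValNat_factorial_eq_sum_range, Nat.cast_id]

theorem padicValNat_two_factorial (n : ℕ) :
    padicValNat 2 n ! = n / 2 + ∑ i ∈ range (n + 1), n / 2 ^ (i + 2) := by
  rw [padicValNat_factorial (b := n + 3) ((Nat.log_le_self 2 n).trans_lt (by omega)),
    sum_Ico_eq_sum_range, show n + 3 - 1 = n + 1 + 1 by omega, sum_range_succ', add_comm,
    add_zero, pow_one]
  congr 1
  exact sum_congr rfl fun i _ => by rw [add_left_comm, one_add_one_eq_two]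

theorem padicValNat_two_card_GL_of_three_mod_eight_general
    (q : ℕ) (hq : q.Prime) (hq8 : q % 8 = 3) (n : ℕ) :
    padicValNat 2 (Nat.card (GL (Fin n) (ZMod q))) =
      n + 2 * (n / 2) + ∑ i ∈ Finset.range (n + 1), n / 2 ^ (i + 2) := by
  have := Fact.mk hq
  have h2q : ¬2 ∣ Fintype.card (ZMod q) := by
    rw [ZMod.card]
    omega
  rw [padicValNat_card_GL_eq_sum h2q, ZMod.card, sum_padicValNat_two_pow_succ_sub_one hq8,
    padicValNat_two_factorial]
  ring

/-- Remark 3.4, `p = 2`: for a prime `q ≡ 3 (mod 8)`,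
`v_2(|GL(n, 𝔽_q)|) = n + 2⌊n/2⌋ + ∑_{i≥2} ⌊n/2^i⌋`. -/
theorem padicValNat_two_card_GL_of_three_mod_eight
    (q : ℕ) (hq : q.Prime) (hq8 : q % 8 = 3) (n : ℕ) (hn : 1 ≤ n) :
    padicValNat 2 (Nat.card (GL (Fin n) (ZMod q))) =
      n + 2 * (n / 2) + ∑ i ∈ Finset.range (n + 1), n / 2 ^ (i + 2) :=
  padicValNat_two_card_GL_of_three_mod_eight_general q hq hq8 n
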